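/- arXiv:2411.03029 — 5 statements merged into one kernel-verified Lean document; each statement's English description precedes it below -/
import Mathlib

section
/- Let A be an m×n complex matrix of rank r. Then there exist injective index maps ρ : Fin r → Fin m and γ : Fin r → Fin n such that the r×r submatrix A(ρ,γ) is invertible and A factors exactly as A = A(:,γ) · A(ρ,γ)⁻¹ · A(ρ,:), i.e. the skeleton (hybrid interpolative/CUR) decomposition K ≈ U K(τ̄,ν̄) V of the paper holds with equality in the exact-rank case. -/
/-!
Choose `r` linearly independent columns `γ` of `A` spanning its column space, so that
`A = C * X` with `C = A(:,γ)`. The matrix `C` has full column rank `r`, so it has `r` linearly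
independent rows `ρ`, i.e. `M = C(ρ,:) = A(ρ,γ)` is invertible. Restricting `A = C * X` to the
rows `ρ` gives `A(ρ,:) = M * X`, hence `A = C * X = C * M⁻¹ * A(ρ,:)`.
-/

open Function Module Set Submodule

theorem exists_fin_linearIndependent_comp_span_eq {K V ι : Type*} [DivisionRing K]
    [AddCommGroup V] [Module K V] [Finite ι] {r : ℕ} (v : ι → V)
    (hr : finrank K (span K (range v)) = r) :
    ∃ a : Fin r → ι, Injective a ∧ LinearIndependent K (v ∘ a) ∧
      span K (range (v ∘ a)) = span K (range v) := by
  obtain ⟨κ, a, ha, hspan, hli⟩ := exists_linearIndependent' K v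
  have : Finite κ := Finite.of_injective a ha
  cases nonempty_fintype κ
  let e : Fin r ≃ κ :=
    (Fintype.equivFinOfCardEq (by rw [← hr, ← hspan, finrank_span_eq_card hli])).symm
  refine ⟨a ∘ e, ha.comp e.injective, hli.comp e e.injective, ?_⟩
  rw [← hspan]
  exact congrArg (span K) (e.surjective.range_comp (v ∘ a))

namespace Matrix

variable {m n k : Type*} [Fintype k]

theorem exists_mul_eq_of_col_mem_span {R : Type*} [CommSemiring R] {A : Matrix m n R}
    {C : Matrix m k R} (h : ∀ j, A.col j ∈ span R (range C.col)) : ∃ X, A = C * X := by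
  simp_rw [← range_mulVecLin, LinearMap.mem_range] at h
  choose x hx using h
  exact ⟨(of x)ᵀ, ext fun i j => (congrFun (hx j) i).symm⟩

theorem eq_mul_inv_submatrix_mul_of_eq_mul {R : Type*} [CommRing R] [DecidableEq k]
    {A : Matrix m n R} {C : Matrix m k R} {X : Matrix k n R} (hA : A = C * X) {ρ : k → m}
    (hM : IsUnit (C.submatrix ρ id)) :
    A = C * (C.submatrix ρ id)⁻¹ * A.submatrix ρ id := by
  have hrows : A.submatrix ρ id = C.submatrix ρ id * X := by
    rw [hA, submatrix_mul _ _ _ id _ bijective_id, submatrix_id_id]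
  rw [hrows, Matrix.mul_assoc, ← Matrix.mul_assoc _⁻¹,
    nonsing_inv_mul _ ((isUnit_iff_isUnit_det _).mp hM), Matrix.one_mul, hA]

variable {K : Type*} [Field K]

theorem exists_submatrix_cols_mul_eq [Fintype n] {r : ℕ} (A : Matrix m n K) (hr : A.rank = r) :
    ∃ γ : Fin r → n, Injective γ ∧ LinearIndependent K (A.submatrix id γ).col ∧
      ∃ X, A = A.submatrix id γ * X := by
  obtain ⟨γ, hγ, hli, hspan⟩ :=
    exists_fin_linearIndependent_comp_span_eq A.col ((rank_eq_finrank_span_cols A).symm.trans hr)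
  refine ⟨γ, hγ, hli, exists_mul_eq_of_col_mem_span fun j => ?_⟩
  exact hspan ▸ subset_span (mem_range_self j)

theorem exists_isUnit_submatrix_rows [Fintype m] {r : ℕ} {C : Matrix m (Fin r) K}
    (h : LinearIndependent K C.col) :
    ∃ ρ : Fin r → m, Injective ρ ∧ IsUnit (C.submatrix ρ id) := by
  have hrank : finrank K (span K (range C.row)) = r := by
    rw [← rank_eq_finrank_span_row, rank_eq_finrank_span_cols, finrank_span_eq_card h,
      Fintype.card_fin]
  obtain ⟨ρ, hρ, hli, -⟩ := exists_fin_linearIndependent_comp_span_eq C.row hrank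
  exact ⟨ρ, hρ, linearIndependent_rows_iff_isUnit.mp hli⟩

end Matrix

/-- Exact skeleton (hybrid interpolative / CUR) decomposition: an `m × n` complex
matrix of rank `r` factors exactly through an invertible `r × r` submatrix. -/
theorem exact_skeleton_decomposition (m n r : ℕ) (A : Matrix (Fin m) (Fin n) ℂ)
    (hrank : A.rank = r) :
    ∃ (ρ : Fin r → Fin m) (γ : Fin r → Fin n),
      Function.Injective ρ ∧ Function.Injective γ ∧
      IsUnit (A.submatrix ρ γ) ∧
      A = A.submatrix id γ * (A.submatrix ρ γ)⁻¹ * A.submatrix ρ id := by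
  obtain ⟨γ, hγ, hcols, X, hA⟩ := Matrix.exists_submatrix_cols_mul_eq A hrank
  obtain ⟨ρ, hρ, hM⟩ := Matrix.exists_isUnit_submatrix_rows hcols
  exact ⟨ρ, γ, hρ, hγ, hM, Matrix.eq_mul_inv_submatrix_mul_of_eq_mul hA hM⟩
end

section
/- Let B ∈ Matrix (Fin r) (Fin n) ℂ and let γ : Fin r → Fin n be injective such that the r×r submatrix C = B(:,γ) satisfies det C ≠ 0 and |det C| ≥ |det B(:,γ')| for every injective γ' : Fin r → Fin n (C is a maximal-volume r×r column submatrix of B). Then every entry of the matrix C⁻¹ · B has absolute value at most 1. -/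
/-- Maximal-volume lemma: if `C = B(:,γ)` is a nonsingular `r × r` column
submatrix of `B` of maximal volume (maximal `|det|` among all `r × r` column
submatrices), then every entry of `C⁻¹ * B` has absolute value at most `1`. -/
theorem maximal_volume_interpolation_bounded (r n : ℕ)
    (B : Matrix (Fin r) (Fin n) ℂ) (γ : Fin r → Fin n)
    (hγ : Function.Injective γ)
    (hdet : (B.submatrix id γ).det ≠ 0)
    (hmax : ∀ γ' : Fin r → Fin n, Function.Injective γ' →
      ‖(B.submatrix id γ').det‖ ≤ ‖(B.submatrix id γ).det‖) :
    ∀ i j, ‖((B.submatrix id γ)⁻¹ * B) i j‖ ≤ 1 := by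
  intro i j
  set C := B.submatrix id γ with hC
  -- Cramer's rule: (C⁻¹ * B) i j = det (C with column i replaced by B · j) / det C
  have key : ((C⁻¹ * B) i j) = (B.submatrix id (Function.update γ i j)).det / C.det := by
    have h1 : (C⁻¹ * B) i j = (C⁻¹.mulVec (fun k => B k j)) i := by
      simp [Matrix.mul_apply, Matrix.mulVec, dotProduct]
    have h2 : C⁻¹ = (C.det)⁻¹ • C.adjugate := by rw [Matrix.inv_def, Ring.inverse_eq_inv]
    rw [h1, h2]
    have h3 : C.adjugate.mulVec (fun k => B k j) = Matrix.cramer C (fun k => B k j) := by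
      rw [Matrix.cramer_eq_adjugate_mulVec]
    rw [Matrix.smul_mulVec, h3, Pi.smul_apply, Matrix.cramer_apply]
    have h4 : C.updateCol i (fun k => B k j) = B.submatrix id (Function.update γ i j) := by
      ext k l
      by_cases hl : l = i
      · subst hl; simp [Matrix.updateCol_self]
      · simp [Matrix.updateCol_ne hl, Function.update_of_ne hl, hC]
    rw [h4]
    rw [smul_eq_mul, div_eq_inv_mul]
  rw [key]
  rw [norm_div]
  have hpos : 0 < ‖C.det‖ := norm_pos_iff.mpr hdet
  rw [div_le_one hpos]
  by_cases hinj : Function.Injective (Function.update γ i j)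
  · exact hmax _ hinj
  · -- not injective: two columns equal, det = 0
    have : (B.submatrix id (Function.update γ i j)).det = 0 := by
      simp only [Function.Injective, not_forall] at hinj
      obtain ⟨a, b, hab, hne⟩ := hinj
      refine Matrix.det_zero_of_column_eq hne ?_
      intro k
      simp [Matrix.submatrix_apply, hab]
    rw [this]
    simp [AbsoluteValue.nonneg]
end

section
/- Translational-invariance rank identity for mode unfoldings: let f : ℤ → ℤ → ℂ, let m₁, n₁, m₂, n₂ ≥ 1, and define M ∈ Matrix (Fin m₁ × Fin m₂ × Fin n₂) (Fin n₁) ℂ by M (i₁,i₂,j₂) j₁ = f ((i₁:ℤ) − (j₁:ℤ)) ((i₂:ℤ) − (j₂:ℤ)), and define N ∈ Matrix (Fin m₁ × Fin (m₂+n₂−1)) (Fin n₁) ℂ by N (i₁,c) j₁ = f ((i₁:ℤ) − (j₁:ℤ)) ((c:ℤ) − (n₂−1)). Then rank M = rank N. -/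
/-!
A matrix whose rows, up to repetition, are the rows of another matrix has the same rank.
Since `i₂ - j₂` ranges over every integer in `[-(n₂ - 1), m₂ - 1]`, the rows of the
mode-3 unfolding are exactly the rows of the interaction matrix on the enlarged
target set, reindexed along the surjection `(i₂, j₂) ↦ i₂ - j₂ + (n₂ - 1)`.
-/

open Function

namespace Matrix

theorem rank_submatrix_of_surjective {m m₀ n R : Type*} [Fintype n] [CommSemiring R]
    [StrongRankCondition R] (A : Matrix m n R) {r : m₀ → m} (hr : Surjective r) :
    (A.submatrix r id).rank = A.rank := by
  refine le_antisymm (rank_submatrix_le A r id) ?_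
  obtain ⟨s, hs⟩ := hr.hasRightInverse
  calc A.rank = ((A.submatrix r id).submatrix s id).rank := by
        rw [submatrix_submatrix, hs.comp_eq_id, id_comp, submatrix_id_id]
    _ ≤ (A.submatrix r id).rank := rank_submatrix_le _ s id

end Matrix

/-- The index of the difference `i - j ∈ [-(n - 1), m - 1]`, shifted to start at `0`. -/
def Fin.shiftedDiff {m n : ℕ} (i : Fin m) (j : Fin n) : Fin (m + n - 1) :=
  ⟨i + (n - 1) - j, by omega⟩

theorem Fin.coe_shiftedDiff {m n : ℕ} (i : Fin m) (j : Fin n) :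
    ((Fin.shiftedDiff i j : ℕ) : ℤ) - ((n : ℤ) - 1) = (i : ℤ) - (j : ℤ) := by
  have := j.isLt
  simp only [Fin.shiftedDiff]
  omega

theorem Fin.shiftedDiff_surjective {m n : ℕ} (hm : 1 ≤ m) (hn : 1 ≤ n) :
    Surjective (uncurry (Fin.shiftedDiff : Fin m → Fin n → Fin (m + n - 1))) := by
  intro c
  have := c.isLt
  refine ⟨(⟨c + 1 - n, by omega⟩, ⟨n - 1 - c, by omega⟩), ?_⟩
  ext
  simp only [uncurry_apply_pair, Fin.shiftedDiff]
  omega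

theorem translational_invariance_rank_general (f : ℤ → ℤ → ℂ) (m₁ n₁ m₂ n₂ : ℕ)
    (hm₂ : 1 ≤ m₂) (hn₂ : 1 ≤ n₂) :
    (Matrix.of fun (p : Fin m₁ × Fin m₂ × Fin n₂) (j₁ : Fin n₁) =>
        f ((p.1 : ℤ) - (j₁ : ℤ)) ((p.2.1 : ℤ) - (p.2.2 : ℤ))).rank =
    (Matrix.of fun (q : Fin m₁ × Fin (m₂ + n₂ - 1)) (j₁ : Fin n₁) =>
        f ((q.1 : ℤ) - (j₁ : ℤ)) ((q.2 : ℤ) - ((n₂ : ℤ) - 1))).rank := by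
  set N := Matrix.of fun (q : Fin m₁ × Fin (m₂ + n₂ - 1)) (j₁ : Fin n₁) =>
    f ((q.1 : ℤ) - (j₁ : ℤ)) ((q.2 : ℤ) - ((n₂ : ℤ) - 1))
  have hM : (Matrix.of fun (p : Fin m₁ × Fin m₂ × Fin n₂) (j₁ : Fin n₁) =>
      f ((p.1 : ℤ) - (j₁ : ℤ)) ((p.2.1 : ℤ) - (p.2.2 : ℤ))) =
      N.submatrix (Prod.map id (uncurry Fin.shiftedDiff)) id := by
    ext ⟨i₁, i₂, j₂⟩ j₁
    simp only [N, Matrix.submatrix_apply, Matrix.of_apply, Prod.map_fst, Prod.map_snd, id,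
      uncurry_apply_pair, Fin.coe_shiftedDiff]
  rw [hM, Matrix.rank_submatrix_of_surjective N
    (surjective_id.prodMap (Fin.shiftedDiff_surjective hm₂ hn₂))]

/-- Translational-invariance rank identity for mode unfoldings: the mode-3
unfolding of a 4-mode tensor whose entries depend only on the index differences
`i₁ - j₁` and `i₂ - j₂` has the same rank as the interaction matrix between an
enlarged target index set of size `m₁ × (m₂ + n₂ - 1)` and the source set. -/
theorem translational_invariance_rank (f : ℤ → ℤ → ℂ) (m₁ n₁ m₂ n₂ : ℕ)
    (hm₁ : 1 ≤ m₁) (hn₁ : 1 ≤ n₁) (hm₂ : 1 ≤ m₂) (hn₂ : 1 ≤ n₂) :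
    (Matrix.of fun (p : Fin m₁ × Fin m₂ × Fin n₂) (j₁ : Fin n₁) =>
        f ((p.1 : ℤ) - (j₁ : ℤ)) ((p.2.1 : ℤ) - (p.2.2 : ℤ))).rank =
    (Matrix.of fun (q : Fin m₁ × Fin (m₂ + n₂ - 1)) (j₁ : Fin n₁) =>
        f ((q.1 : ℤ) - (j₁ : ℤ)) ((q.2 : ℤ) - ((n₂ : ℤ) - 1))).rank :=
  translational_invariance_rank_general f m₁ n₁ m₂ n₂ hm₂ hn₂
end

section
/- Green's function instance of the translational-invariance rank identity: fix n ≥ 1, ω ∈ ℝ, and m₁, n₁, m₂, n₂ ≥ 1. Define the 4-mode Green's function tensor for two parallel unit plates at distance 1 by K i₁ i₂ j₁ j₂ = exp(−iωρ)/ρ where ρ = √( ((i₁−j₁)/n)² + ((i₂−j₂)/n)² + 1 ), and let M ∈ Matrix (Fin m₁ × Fin m₂ × Fin n₂) (Fin n₁) ℂ be its mode-3 unfolding, M (i₁,i₂,j₂) j₁ = K i₁ i₂ j₁ j₂. Then rank M = rank N, where N ∈ Matrix (Fin m₁ × Fin (m₂+n₂−1)) (Fin n₁) ℂ is the Green's function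 interaction matrix between the enlarged target grid and a source segment: N (i₁,c) j₁ = exp(−iωρ')/ρ' with ρ' = √( ((i₁−j₁)/n)² + ((c−(n₂−1))/n)² + 1 ). -/
/-! The entry of the unfolding at row `(i₁, i₂, j₂)` depends on `(i₂, j₂)` only through the
offset `i₂ - j₂`, and `(i₂, j₂) ↦ i₂ + (n₂ - 1) - j₂` maps onto `Fin (m₂ + n₂ - 1)`. So the
unfolding is the interaction matrix with its rows repeated, and repeating rows does not change
the rank. -/

open Matrix

theorem Matrix.rank_submatrix_of_surjective_s8 {m m' n R : Type*} [Fintype n] [CommSemiring R]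
    (A : Matrix m n R) {f : m' → m} (hf : Function.Surjective f) :
    (A.submatrix f id).rank = A.rank := by
  have hinj := LinearMap.funLeft_injective_of_surjective R R f hf
  rw [rank, rank, show (id : n → n) = Equiv.refl n from rfl, mulVecLin_submatrix,
    Equiv.refl_symm, show LinearMap.funLeft R R (Equiv.refl n) = LinearMap.id from rfl,
    LinearMap.comp_id, LinearMap.range_comp]
  exact (LinearEquiv.finrank_eq
    (Submodule.equivMapOfInjective _ hinj (LinearMap.range A.mulVecLin))).symm

def Fin.shiftedSub {m₂ n₂ : ℕ} (i : Fin m₂) (j : Fin n₂) : Fin (m₂ + n₂ - 1) :=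
  ⟨i + (n₂ - 1) - j, by omega⟩

theorem Fin.shiftedSub_surjective {m₂ n₂ : ℕ} (hm₂ : 1 ≤ m₂) (hn₂ : 1 ≤ n₂) :
    Function.Surjective fun p : Fin m₂ × Fin n₂ => Fin.shiftedSub p.1 p.2 := by
  rintro ⟨c, hc⟩
  by_cases h : n₂ - 1 ≤ c
  · exact ⟨(⟨c - (n₂ - 1), by omega⟩, ⟨0, by omega⟩), Fin.ext (by simp only [shiftedSub]; omega)⟩
  · exact ⟨(⟨0, by omega⟩, ⟨n₂ - 1 - c, by omega⟩), Fin.ext (by simp only [shiftedSub]; omega)⟩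

theorem Fin.cast_shiftedSub_sub {m₂ n₂ : ℕ} (i : Fin m₂) (j : Fin n₂) :
    ((shiftedSub i j : ℕ) : ℝ) - ((n₂ : ℝ) - 1) = (i : ℝ) - (j : ℝ) := by
  have hj := j.isLt
  rw [shiftedSub, Nat.cast_sub (by omega), Nat.cast_add, Nat.cast_sub (by omega)]
  push_cast
  ring

theorem Matrix.rank_of_sub_eq_rank_of_shifted {ι κ R : Type*} [Fintype κ] [CommSemiring R]
    {m₂ n₂ : ℕ} (hm₂ : 1 ≤ m₂) (hn₂ : 1 ≤ n₂) (K : ι → ℝ → κ → R) :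
    (of fun (p : ι × Fin m₂ × Fin n₂) j => K p.1 ((p.2.1 : ℝ) - (p.2.2 : ℝ)) j).rank =
      (of fun (q : ι × Fin (m₂ + n₂ - 1)) j => K q.1 ((q.2 : ℝ) - ((n₂ : ℝ) - 1)) j).rank := by
  have hsub : (of fun (p : ι × Fin m₂ × Fin n₂) j => K p.1 ((p.2.1 : ℝ) - (p.2.2 : ℝ)) j) =
      (of fun (q : ι × Fin (m₂ + n₂ - 1)) j => K q.1 ((q.2 : ℝ) - ((n₂ : ℝ) - 1)) j).submatrix
        (Prod.map id fun p => Fin.shiftedSub p.1 p.2) id := by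
    ext ⟨i, i₂, j₂⟩ j
    simp [Fin.cast_shiftedSub_sub]
  rw [hsub, rank_submatrix_of_surjective_s8 _
    (Function.surjective_id.prodMap (Fin.shiftedSub_surjective hm₂ hn₂))]

theorem green_unfolding_rank_eq_general (n : ℕ) (ω : ℝ)
    (m₁ n₁ m₂ n₂ : ℕ) (hm₂ : 1 ≤ m₂) (hn₂ : 1 ≤ n₂) :
    (Matrix.of fun (p : Fin m₁ × Fin m₂ × Fin n₂) (j₁ : Fin n₁) =>
        Complex.exp (-(Complex.I) * (ω : ℂ) *
          ((Real.sqrt ((((p.1 : ℝ) - (j₁ : ℝ)) / (n : ℝ)) ^ 2 +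
              (((p.2.1 : ℝ) - (p.2.2 : ℝ)) / (n : ℝ)) ^ 2 + 1) : ℝ) : ℂ)) /
        ((Real.sqrt ((((p.1 : ℝ) - (j₁ : ℝ)) / (n : ℝ)) ^ 2 +
            (((p.2.1 : ℝ) - (p.2.2 : ℝ)) / (n : ℝ)) ^ 2 + 1) : ℝ) : ℂ)).rank =
    (Matrix.of fun (q : Fin m₁ × Fin (m₂ + n₂ - 1)) (j₁ : Fin n₁) =>
        Complex.exp (-(Complex.I) * (ω : ℂ) *
          ((Real.sqrt ((((q.1 : ℝ) - (j₁ : ℝ)) / (n : ℝ)) ^ 2 +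
              (((q.2 : ℝ) - ((n₂ : ℝ) - 1)) / (n : ℝ)) ^ 2 + 1) : ℝ) : ℂ)) /
        ((Real.sqrt ((((q.1 : ℝ) - (j₁ : ℝ)) / (n : ℝ)) ^ 2 +
            (((q.2 : ℝ) - ((n₂ : ℝ) - 1)) / (n : ℝ)) ^ 2 + 1) : ℝ) : ℂ)).rank :=
  rank_of_sub_eq_rank_of_shifted hm₂ hn₂ fun (i₁ : Fin m₁) (t : ℝ) (j₁ : Fin n₁) =>
    let ρ := Real.sqrt ((((i₁ : ℝ) - (j₁ : ℝ)) / (n : ℝ)) ^ 2 + (t / (n : ℝ)) ^ 2 + 1)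
    Complex.exp (-(Complex.I) * (ω : ℂ) * (ρ : ℂ)) / (ρ : ℂ)

/-- Green's function instance of the translational-invariance rank identity:
the mode-3 unfolding of the free-space Helmholtz Green's function tensor for two
parallel facing unit plates at distance 1 has the same rank as the Green's
interaction matrix between an enlarged target grid and a source segment. -/
theorem green_unfolding_rank_eq (n : ℕ) (hn : 1 ≤ n) (ω : ℝ)
    (m₁ n₁ m₂ n₂ : ℕ) (hm₁ : 1 ≤ m₁) (hn₁ : 1 ≤ n₁) (hm₂ : 1 ≤ m₂) (hn₂ : 1 ≤ n₂) :
    (Matrix.of fun (p : Fin m₁ × Fin m₂ × Fin n₂) (j₁ : Fin n₁) =>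
        Complex.exp (-(Complex.I) * (ω : ℂ) *
          ((Real.sqrt ((((p.1 : ℝ) - (j₁ : ℝ)) / (n : ℝ)) ^ 2 +
              (((p.2.1 : ℝ) - (p.2.2 : ℝ)) / (n : ℝ)) ^ 2 + 1) : ℝ) : ℂ)) /
        ((Real.sqrt ((((p.1 : ℝ) - (j₁ : ℝ)) / (n : ℝ)) ^ 2 +
            (((p.2.1 : ℝ) - (p.2.2 : ℝ)) / (n : ℝ)) ^ 2 + 1) : ℝ) : ℂ)).rank =
    (Matrix.of fun (q : Fin m₁ × Fin (m₂ + n₂ - 1)) (j₁ : Fin n₁) =>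
        Complex.exp (-(Complex.I) * (ω : ℂ) *
          ((Real.sqrt ((((q.1 : ℝ) - (j₁ : ℝ)) / (n : ℝ)) ^ 2 +
              (((q.2 : ℝ) - ((n₂ : ℝ) - 1)) / (n : ℝ)) ^ 2 + 1) : ℝ) : ℂ)) /
        ((Real.sqrt ((((q.1 : ℝ) - (j₁ : ℝ)) / (n : ℝ)) ^ 2 +
            (((q.2 : ℝ) - ((n₂ : ℝ) - 1)) / (n : ℝ)) ^ 2 + 1) : ℝ) : ℂ)).rank :=
  green_unfolding_rank_eq_general n ω m₁ n₁ m₂ n₂ hm₂ hn₂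
end

section
/- Exactness of interpolative decompositions computed from proxy rows: let A ∈ Matrix (Fin m) (Fin n) ℂ and let σ : Fin s → Fin m index a set of proxy rows that spans the row space of A, in the sense that there exists X ∈ Matrix (Fin m) (Fin s) ℂ with A = X · A(σ,:). If the column ID computed on the proxy rows is exact, i.e. there exist γ : Fin r → Fin n and V ∈ Matrix (Fin r) (Fin n) ℂ with A(σ,:) = A(σ,γ) · V, then the same skeleton columns and interpolation matrix give an exact column ID of the full matrix: A = A(:,γ) · V. -/
/-!
Left multiplication preserves exact column IDs: if `B = B(:,γ) V` then
`X B = X B(:,γ) V = (X B)(:,γ) V`, since taking columns commutes with multiplying on the left.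
Apply this to `B = A(σ,:)` and the `X` with `A = X A(σ,:)`.
-/

namespace Matrix

variable {l m n r α : Type*} [Fintype r] [NonUnitalSemiring α]

def IsColumnID (A : Matrix m n α) (γ : r → n) (V : Matrix r n α) : Prop :=
  A = A.submatrix id γ * V

variable [Fintype m]

theorem IsColumnID.mul_left {B : Matrix m n α} {γ : r → n} {V : Matrix r n α}
    (h : B.IsColumnID γ V) (X : Matrix l m α) : (X * B).IsColumnID γ V :=
  calc X * B = X * (B.submatrix id γ * V) := congrArg (X * ·) h
    _ = (X * B).submatrix id γ * V := by
      rw [submatrix_mul X B id id γ Function.bijective_id, submatrix_id_id, Matrix.mul_assoc]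

end Matrix

/-- Exactness of interpolative decompositions computed from proxy rows: if the
proxy rows `σ` span the row space of `A` (i.e. `A = X · A(σ,:)` for some `X`)
and the column ID computed on the proxy rows is exact, then the same skeleton
columns and interpolation matrix give an exact column ID of the full matrix. -/
theorem proxy_row_ID_exact (m n s r : ℕ)
    (A : Matrix (Fin m) (Fin n) ℂ)
    (σ : Fin s → Fin m) (X : Matrix (Fin m) (Fin s) ℂ)
    (hproxy : A = X * A.submatrix σ id)
    (γ : Fin r → Fin n) (V : Matrix (Fin r) (Fin n) ℂ)
    (hID : A.submatrix σ id = A.submatrix σ γ * V) :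
    A = A.submatrix id γ * V := by
  have hproxyID : (A.submatrix σ id).IsColumnID γ V := hID
  have hfullID := hproxyID.mul_left X
  rw [← hproxy] at hfullID
  exact hfullID
end
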